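/- arXiv:1810.01026 — 2 statements merged into one kernel-verified Lean document; each statement's English description precedes it below -/
import Mathlib

section
/- Let f : X → Y be a continuous open map between topological spaces such that every fiber f⁻¹({y}) is connected. Then for every connected subset C of the image f(X), the preimage f⁻¹(C) is connected. -/
/-- A continuous open map with connected fibers: the preimage of any connected
subset of the image is connected. -/
theorem stmt_0 {X Y : Type*} [TopologicalSpace X] [TopologicalSpace Y]
    (f : X → Y) (hcont : Continuous f) (hopen : IsOpenMap f)
    (hfib : ∀ y : Y, IsPreconnected (f ⁻¹' {y}))
    (C : Set Y) (hC : C ⊆ Set.range f) (hCconn : IsConnected C) :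
    IsConnected (f ⁻¹' C) := by
  obtain ⟨⟨y₀, hy₀⟩, hCpre⟩ := hCconn
  obtain ⟨x₀, hx₀⟩ := hC hy₀
  refine ⟨⟨x₀, by simpa [hx₀] using hy₀⟩, ?_⟩
  intro u v hu hv hcov ⟨a, haC, hau⟩ ⟨b, hbC, hbv⟩
  -- apply preconnectedness of C to f(u) and f(v)
  have key : (C ∩ (f '' u ∩ f '' v)).Nonempty := by
    refine hCpre (f '' u) (f '' v) (hopen u hu) (hopen v hv) ?_ ?_ ?_
    · intro y hy
      obtain ⟨x, hx⟩ := hC hy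
      have hx' : x ∈ u ∪ v := hcov (by simp [hx, hy])
      cases hx' with
      | inl h => exact Or.inl ⟨x, h, hx⟩
      | inr h => exact Or.inr ⟨x, h, hx⟩
    · exact ⟨f a, haC, a, hau, rfl⟩
    · exact ⟨f b, hbC, b, hbv, rfl⟩
  obtain ⟨y, hyC, ⟨p, hpu, hpf⟩, ⟨q, hqv, hqf⟩⟩ := key
  have hkey : ((f ⁻¹' {y}) ∩ (u ∩ v)).Nonempty := by
    refine hfib y u v hu hv ?_ ⟨p, by simp [hpf], hpu⟩ ⟨q, by simp [hqf], hqv⟩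
    intro x hx
    exact hcov (by simp at hx; simp [hx, hyC])
  obtain ⟨x, hxf, hxuv⟩ := hkey
  exact ⟨x, by simp at hxf; simp [hxf, hyC], hxuv⟩
end

section
/- Let Δ ⊆ ℝⁿ be a convex polytope (the convex hull of a finite set) and let S be a finite union of proper faces of Δ. Then there exists an open convex subset U of ℝⁿ such that Δ \ S = Δ ∩ U. -/
/-! A proper face is cut out of `Δ` by a supporting hyperplane `ℓ = c` with `c ≤ ℓ` on `Δ`,
so removing it from `Δ` amounts to intersecting with the open half-space `c < ℓ`. Removing
finitely many proper faces amounts to intersecting with the intersection of these open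
half-spaces, which is open and convex. -/

/-- `F` is a face of the convex set `Δ ⊆ ℝⁿ`: either `F = Δ`, or `F` is the
intersection of `Δ` with a supporting hyperplane (a hyperplane meeting `Δ`
with `Δ` contained in one of the closed half-spaces it bounds). -/
def IsFace {n : ℕ} (Δ F : Set (Fin n → ℝ)) : Prop :=
  F = Δ ∨ ∃ (ℓ : (Fin n → ℝ) →ₗ[ℝ] ℝ) (c : ℝ), ℓ ≠ 0 ∧
    (∀ x ∈ Δ, c ≤ ℓ x) ∧ (∃ x ∈ Δ, ℓ x = c) ∧ F = {x ∈ Δ | ℓ x = c}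

open Set

lemma diff_setOf_eq_eq_inter_setOf_lt {α β : Type*} [LinearOrder β] {Δ : Set α} {f : α → β}
    {c : β} (hge : ∀ x ∈ Δ, c ≤ f x) :
    Δ \ {x ∈ Δ | f x = c} = Δ ∩ {x | c < f x} := by
  ext x
  simp only [mem_sdiff, mem_ofPred_eq, mem_inter_iff]
  exact ⟨fun ⟨hx, hne⟩ => ⟨hx, (hge x hx).lt_of_ne fun h => hne ⟨hx, h.symm⟩⟩,
    fun ⟨hx, hlt⟩ => ⟨hx, fun h => hlt.ne' h.2⟩⟩

lemma IsFace.exists_isOpen_convex_diff_eq_inter {n : ℕ} {Δ F : Set (Fin n → ℝ)}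
    (hF : IsFace Δ F) (hFΔ : F ⊂ Δ) :
    ∃ U : Set (Fin n → ℝ), IsOpen U ∧ Convex ℝ U ∧ Δ \ F = Δ ∩ U := by
  rcases hF with rfl | ⟨ℓ, c, -, hge, -, rfl⟩
  · exact absurd rfl hFΔ.ne
  exact ⟨{x | c < ℓ x}, isOpen_lt continuous_const ℓ.continuous_of_finiteDimensional,
    convex_halfSpace_gt ℓ.isLinear c, diff_setOf_eq_eq_inter_setOf_lt hge⟩

lemma exists_isOpen_convex_diff_biUnion_eq_inter {E : Type*} [TopologicalSpace E]
    [AddCommGroup E] [Module ℝ E] {Δ : Set E} (fs : Finset (Set E))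
    (h : ∀ F ∈ fs, ∃ U : Set E, IsOpen U ∧ Convex ℝ U ∧ Δ \ F = Δ ∩ U) :
    ∃ U : Set E, IsOpen U ∧ Convex ℝ U ∧ Δ \ ⋃ F ∈ fs, F = Δ ∩ U := by
  choose! U hUopen hUconvex hU using h
  refine ⟨⋂ F ∈ fs, U F, isOpen_biInter_finset hUopen, convex_iInter₂ hUconvex, ?_⟩
  ext x
  simp only [mem_sdiff, mem_iUnion, mem_inter_iff, mem_iInter, not_exists]
  refine and_congr_right fun hx => forall₂_congr fun F hF => ?_
  simpa [hx] using Set.ext_iff.mp (hU F hF) x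

theorem stmt_6_general {n : ℕ} (Δ : Set (Fin n → ℝ))
    (fs : Finset (Set (Fin n → ℝ)))
    (hfs : ∀ F ∈ fs, IsFace Δ F ∧ F ⊂ Δ)
    (S : Set (Fin n → ℝ)) (hS : S = ⋃ F ∈ fs, F) :
    ∃ U : Set (Fin n → ℝ), IsOpen U ∧ Convex ℝ U ∧ Δ \ S = Δ ∩ U :=
  hS ▸ exists_isOpen_convex_diff_biUnion_eq_inter fs fun F hF =>
    (hfs F hF).1.exists_isOpen_convex_diff_eq_inter (hfs F hF).2

/-- If `Δ ⊆ ℝⁿ` is a convex polytope and `S` is a finite union of proper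
faces, then there exists an open convex `U` with `Δ \ S = Δ ∩ U`. -/
theorem stmt_6 {n : ℕ} (t : Finset (Fin n → ℝ)) (Δ : Set (Fin n → ℝ))
    (hΔ : Δ = convexHull ℝ (t : Set (Fin n → ℝ)))
    (fs : Finset (Set (Fin n → ℝ)))
    (hfs : ∀ F ∈ fs, IsFace Δ F ∧ F ⊂ Δ)
    (S : Set (Fin n → ℝ)) (hS : S = ⋃ F ∈ fs, F) :
    ∃ U : Set (Fin n → ℝ), IsOpen U ∧ Convex ℝ U ∧ Δ \ S = Δ ∩ U :=
  stmt_6_general Δ fs hfs S hS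
end
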